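/- arXiv:2105.03697 — 3 statements merged into one kernel-verified Lean document; each statement's English description precedes it below -/
import Mathlib

section
/- A linear code C ⊆ F_2^n (a subspace) is k-wise independent if and only if its dual code C^⊥ has minimum Hamming weight greater than k; i.e., if C^⊥ has minimum distance > k, then for any set I ⊂ [n] of size k and any y ∈ {0,1}^k, the number of codewords x ∈ C with x restricted to I equal to y is exactly |C|/2^k. -/
/-!
Restricting codewords to an index set `I` is a linear map `C → F^I`, whose fibres over its
image are cosets of its kernel; so every pattern on `I` is hit by exactly `|C| / |F|^|I|`
codewords precisely when this restriction is onto. By duality the image is a proper subspace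
iff a nonzero linear form on `F^I` kills it, i.e. iff a nonzero dual codeword is supported
in `I`. Since `k ≤ n`, a dual codeword has weight at most `k` iff it is supported in some
`k`-set `I`.
-/

open scoped Classical

open Finset

section Fibers

variable {R M N : Type*} [Ring R] [AddCommGroup M] [Module R M] [AddCommGroup N] [Module R N]
  [Fintype M] [DecidableEq N]

theorem Submodule.card_filter_mem_apply_eq_of_mem_map (C : Submodule R M) (f : M →ₗ[R] N)
    {v w : N} (hv : v ∈ C.map f) (hw : w ∈ C.map f) :
    #{x | x ∈ C ∧ f x = v} = #{x | x ∈ C ∧ f x = w} := by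
  obtain ⟨a, haC, rfl⟩ := hv
  obtain ⟨b, hbC, rfl⟩ := hw
  refine card_equiv (Equiv.addRight (b - a)) fun x => ?_
  simp [C.add_mem_iff_left (C.sub_mem hbC haC), ← eq_sub_iff_add_eq]

theorem Submodule.card_filter_mem_apply_eq_mul_card_eq_of_map_eq_top [Fintype N]
    (C : Submodule R M) (f : M →ₗ[R] N) (hf : C.map f = ⊤) (w : N) :
    #{x | x ∈ C ∧ f x = w} * Fintype.card N = Nat.card C := by
  have hfiber (v : N) : #{x | x ∈ C ∧ f x = v} = #{x | x ∈ C ∧ f x = w} :=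
    C.card_filter_mem_apply_eq_of_mem_map f (hf ▸ Submodule.mem_top) (hf ▸ Submodule.mem_top)
  rw [Nat.card_eq_fintype_card, Fintype.card_subtype,
    card_eq_sum_card_fiberwise (f := f) (s := {x | x ∈ C}) (t := univ) fun _ _ => mem_univ _]
  simp only [filter_filter, hfiber, sum_const, card_univ, smul_eq_mul, mul_comm]

end Fibers

abbrev Finset.restrictₗ {ι : Type*} (K : Type*) [Semiring K] (s : Finset ι) :
    (ι → K) →ₗ[K] (s → K) :=
  LinearMap.funLeft K K (↑)

theorem Submodule.forall_card_filter_eqOn_mul_eq_card_iff {K ι : Type*} [Fintype ι]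
    [DecidableEq ι] [Ring K] [Fintype K] [DecidableEq K] (C : Submodule K (ι → K)) (s : Finset ι) :
    (∀ y : ι → K, #{x | x ∈ C ∧ ∀ i ∈ s, x i = y i} * Fintype.card K ^ #s = Nat.card C) ↔
      C.map (s.restrictₗ K) = ⊤ := by
  have hfilter (y : ι → K) : #{x | x ∈ C ∧ ∀ i ∈ s, x i = y i} =
      #{x | x ∈ C ∧ s.restrictₗ K x = s.restrictₗ K y} := by
    simp [funext_iff]
  constructor
  · intro h
    refine eq_top_iff.2 fun v _ => ?_
    obtain ⟨y, rfl⟩ := LinearMap.funLeft_surjective_of_injective K K _ Subtype.val_injective v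
    have hpos : 0 < #{x | x ∈ C ∧ ∀ i ∈ s, x i = y i} :=
      Nat.pos_of_mul_pos_right ((h y).symm ▸ Nat.card_pos)
    obtain ⟨x, hx⟩ := card_pos.1 (hfilter y ▸ hpos)
    exact ⟨x, (mem_filter.1 hx).2⟩
  · intro htop y
    rw [hfilter, ← C.card_filter_mem_apply_eq_mul_card_eq_of_map_eq_top _ htop (s.restrictₗ K y),
      Fintype.card_fun, Fintype.card_coe]

section Restriction

variable {K ι : Type*} [Fintype ι]

theorem dotProduct_eq_restrictₗ_dotProduct [Semiring K] (s : Finset ι) {y : ι → K}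
    (hy : ∀ i ∉ s, y i = 0) (x : ι → K) :
    x ⬝ᵥ y = s.restrictₗ K x ⬝ᵥ s.restrictₗ K y := by
  rw [dotProduct, ← sum_subset (subset_univ s) fun i _ hi => by simp [hy i hi]]
  exact (sum_coe_sort s _).symm

theorem Submodule.map_restrictₗ_eq_top_iff [Field K] (C : Submodule K (ι → K)) (s : Finset ι) :
    C.map (s.restrictₗ K) = ⊤ ↔
      ∀ y : ι → K, (∀ i ∉ s, y i = 0) → (∀ x ∈ C, x ⬝ᵥ y = 0) → y = 0 := by
  constructor
  · intro htop y hys horth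
    have hres : s.restrictₗ K y = 0 := by
      refine dotProduct_eq_zero_iff.1 fun w => ?_
      obtain ⟨x, hxC, rfl⟩ := htop.ge (Submodule.mem_top (x := w))
      rw [dotProduct_comm, ← dotProduct_eq_restrictₗ_dotProduct s hys, horth x hxC]
    funext i
    by_cases hi : i ∈ s
    · exact congrFun hres ⟨i, hi⟩
    · exact hys i hi
  · intro h
    by_contra hne
    obtain ⟨φ, hφ0, hφ⟩ :=
      Submodule.exists_dual_map_eq_bot_of_lt_top (lt_top_iff_ne_top.2 hne) inferInstance
    set y := (dotProductEquiv K ι).symm (φ ∘ₗ s.restrictₗ K)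
    have hy (x : ι → K) : x ⬝ᵥ y = φ (s.restrictₗ K x) := by
      rw [dotProduct_comm, ← dotProductEquiv_apply_apply, LinearEquiv.apply_symm_apply]
      rfl
    have hys (i : ι) (hi : i ∉ s) : y i = 0 := by
      have : s.restrictₗ K (Pi.single i 1) = 0 := by
        funext j
        exact Pi.single_eq_of_ne (ne_of_mem_of_not_mem j.2 hi) 1
      simp [y, this]
    have horth (x : ι → K) (hx : x ∈ C) : x ⬝ᵥ y = 0 := by
      rw [hy, ← Submodule.mem_bot K, ← hφ]
      exact Submodule.mem_map_of_mem (Submodule.mem_map_of_mem hx)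
    refine hφ0 (LinearMap.ext fun v => ?_)
    obtain ⟨x, rfl⟩ := LinearMap.funLeft_surjective_of_injective K K _ Subtype.val_injective v
    rw [← hy, h y hys horth, dotProduct_zero, LinearMap.zero_apply]

end Restriction

section Weight

variable {K ι : Type*} [Fintype ι] [Zero K] [DecidableEq K]

theorem hammingNorm_le_iff_exists_card_eq {k : ℕ} (hk : k ≤ Fintype.card ι) (y : ι → K) :
    hammingNorm y ≤ k ↔ ∃ s : Finset ι, #s = k ∧ ∀ i ∉ s, y i = 0 := by
  constructor
  · intro hy
    obtain ⟨s, hsub, hs⟩ := exists_superset_card_eq hy (by simpa using hk)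
    exact ⟨s, hs, fun i hi => by_contra fun hyi => hi (hsub (by simpa using hyi))⟩
  · rintro ⟨s, rfl, hys⟩
    exact card_le_card fun i hi => by_contra fun his => (mem_filter.1 hi).2 (hys i his)

theorem forall_lt_hammingNorm_iff_forall_card_eq (P : (ι → K) → Prop) {k : ℕ}
    (hk : k ≤ Fintype.card ι) :
    (∀ y, y ≠ 0 → P y → k < hammingNorm y) ↔
      ∀ s : Finset ι, #s = k → ∀ y, (∀ i ∉ s, y i = 0) → P y → y = 0 := by
  constructor
  · rintro h s hs y hys hP
    by_contra hy
    exact (h y hy hP).not_ge ((hammingNorm_le_iff_exists_card_eq hk y).2 ⟨s, hs, hys⟩)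
  · intro h y hy hP
    by_contra! hle
    obtain ⟨s, hs, hys⟩ := (hammingNorm_le_iff_exists_card_eq hk y).1 hle
    exact hy (h s hs y hys hP)

end Weight

/-- **k-wise independence ↔ dual distance.** A linear code `C ⊆ F₂ⁿ` is
`k`-wise independent (i.e., for every index set `I` of size `k` and every
pattern `y`, exactly `|C|/2ᵏ` codewords restrict to `y` on `I`) if and only if
every nonzero vector of the dual code `C⊥` has Hamming weight greater than
`k`. -/
theorem stmt6 (n k : ℕ) (hk : k ≤ n) (C : Submodule (ZMod 2) (Fin n → ZMod 2)) :
    (∀ y : Fin n → ZMod 2, y ≠ 0 → (∀ x ∈ C, ∑ i, x i * y i = 0) →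
        k < hammingDist y 0)
      ↔ (∀ I : Finset (Fin n), I.card = k → ∀ y : Fin n → ZMod 2,
          (Finset.univ.filter
              (fun x : Fin n → ZMod 2 => x ∈ C ∧ ∀ i ∈ I, x i = y i)).card * 2 ^ k
            = Nat.card C) := by
  simp only [hammingDist_zero_right, ← dotProduct.eq_1]
  rw [forall_lt_hammingNorm_iff_forall_card_eq _ (by simpa using hk)]
  refine forall₂_congr fun I hI => ?_
  rw [← C.map_restrictₗ_eq_top_iff, ← C.forall_card_filter_eqOn_mul_eq_card_iff, ZMod.card, hI]
  -- the sides differ only in the `Decidable` instance of `∀ i ∈ I, x i = y i` over `Fin n`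
  congr!
end

section
/- Let Π ⊆ {1,-1}^n and C ⊆ {1,-1}^n be two disjoint sets, each of which is k-wise independent, and suppose every element of C is ε-far from Π in relative Hamming distance. Define the partial function f with f(x) = -1 for x ∈ Π and f(x) = 1 for x ε-far from Π. Then the threshold degree of f is at least k. -/
/-!
On the cube, `x i ^ m` only depends on the parity of `m`, so a polynomial of degree `< k` is a
combination of characters `∏ j ∈ J, x j` with `#J < k`. A `k`-wise independent set sees every
sign pattern on a `k`-set `I ⊇ J` equally often, so each nonconstant such character sums to zero
over it, and the sum of `p` over `Π` and over `C` is the same constant times the cardinality.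
A polynomial negative on `Π` and positive on `C` would make that constant both negative and
positive.
-/

open scoped Classical

/-- A set `S ⊆ {1,-1}ⁿ` is `k`-wise independent: the restriction of a uniform
element of `S` to any `k` coordinates is uniform on `{1,-1}ᵏ`. -/
def kwiseIndep (n k : ℕ) (S : Finset (Fin n → ℝ)) : Prop :=
  ∀ I : Finset (Fin n), I.card = k → ∀ y : Fin n → ℝ,
    (∀ i, y i = 1 ∨ y i = -1) →
    (S.filter (fun x => ∀ i ∈ I, x i = y i)).card * 2 ^ k = S.card

open Finset MvPolynomial

section SignPatterns

variable {n k : ℕ}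

def signVec (T : Finset (Fin n)) : Fin n → ℝ := fun i => if i ∈ T then -1 else 1

lemma signVec_mem_cube (T : Finset (Fin n)) (i : Fin n) :
    signVec T i = 1 ∨ signVec T i = -1 := by
  unfold signVec; split_ifs <;> simp

lemma filter_eq_neg_one_eq_iff {x : Fin n → ℝ} (hx : ∀ i, x i = 1 ∨ x i = -1)
    {I T : Finset (Fin n)} (hTI : T ⊆ I) :
    I.filter (fun i => x i = -1) = T ↔ ∀ i ∈ I, x i = signVec T i := by
  constructor
  · rintro rfl i hi
    rcases hx i with h | h <;> simp [signVec, hi, h]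
  · intro h
    ext i
    by_cases hiT : i ∈ T
    · simpa [hiT, hTI hiT, signVec] using h i (hTI hiT)
    · suffices i ∈ I → x i ≠ -1 by simpa [hiT]
      intro hi
      norm_num [h i hi, signVec, hiT]

lemma sum_powerset_prod_signVec_eq_zero {I J : Finset (Fin n)} (hJI : J ⊆ I)
    (hJ : J.Nonempty) : ∑ T ∈ I.powerset, ∏ j ∈ J, signVec T j = 0 := by
  set f : Fin n → ℝ := fun i => if i ∈ J then -1 else 1
  have hprod : ∀ T ∈ I.powerset, ∏ j ∈ J, signVec T j = (∏ i ∈ T, f i) * ∏ i ∈ I \ T, 1 := by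
    intro T _
    simp only [signVec, f, prod_ite_mem, prod_const_one, mul_one, inter_comm]
  obtain ⟨j, hj⟩ := hJ
  rw [sum_congr rfl hprod, ← prod_add]
  exact prod_eq_zero (hJI hj) (by simp [f, hj])

variable {S : Finset (Fin n → ℝ)}

lemma kwiseIndep.card_filter_eq_signVec (hind : kwiseIndep n k S) {I : Finset (Fin n)}
    (hI : I.card = k) (T : Finset (Fin n)) :
    ((S.filter fun x => ∀ i ∈ I, x i = signVec T i).card : ℝ) = S.card / 2 ^ k := by
  rw [eq_div_iff (by positivity)]
  exact_mod_cast hind I hI _ (signVec_mem_cube T)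

lemma kwiseIndep.sum_prod_eq_zero (hk : k ≤ n) (hcube : ∀ x ∈ S, ∀ i, x i = 1 ∨ x i = -1)
    (hind : kwiseIndep n k S) {J : Finset (Fin n)} (hJ : J.Nonempty) (hJk : J.card ≤ k) :
    ∑ x ∈ S, ∏ j ∈ J, x j = 0 := by
  obtain ⟨I, hJI, -, hI⟩ := exists_subsuperset_card_eq (subset_univ J) hJk (by simpa using hk)
  have hmaps : ∀ x ∈ S, I.filter (fun i => x i = -1) ∈ I.powerset :=
    fun x _ => mem_powerset.2 (filter_subset _ _)
  have hfiber : ∀ T ∈ I.powerset, ∑ x ∈ S with I.filter (fun i => x i = -1) = T, ∏ j ∈ J, x j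
      = S.card / 2 ^ k * ∏ j ∈ J, signVec T j := by
    intro T hT
    rw [filter_congr fun x hx => filter_eq_neg_one_eq_iff (hcube x hx) (mem_powerset.1 hT)]
    have hconst : ∀ x ∈ S.filter fun x => ∀ i ∈ I, x i = signVec T i,
        ∏ j ∈ J, x j = ∏ j ∈ J, signVec T j :=
      fun x hx => prod_congr rfl fun j hj => (mem_filter.1 hx).2 j (hJI hj)
    rw [sum_eq_card_nsmul hconst, nsmul_eq_mul, hind.card_filter_eq_signVec hI]
  rw [← sum_fiberwise_of_maps_to hmaps, sum_congr rfl hfiber, ← mul_sum,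
    sum_powerset_prod_signVec_eq_zero hJI hJ, mul_zero]

end SignPatterns

section OddSupport

variable {σ R : Type*} [CommRing R]

def oddSupport (d : σ →₀ ℕ) : Finset σ := d.support.filter fun i => Odd (d i)

lemma pow_eq_ite_odd {a : R} (ha : a = 1 ∨ a = -1) (m : ℕ) :
    a ^ m = if Odd m then a else 1 := by
  rcases Nat.even_or_odd m with hm | hm
  · rcases ha with rfl | rfl <;> simp [hm.neg_one_pow, Nat.not_odd_iff_even.2 hm]
  · rcases ha with rfl | rfl <;> simp [hm.neg_one_pow, hm]

lemma eval_eq_of_mem_cube {x : σ → R} (hx : ∀ i, x i = 1 ∨ x i = -1) (p : MvPolynomial σ R) :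
    eval x p = ∑ d ∈ p.support, p.coeff d * ∏ i ∈ oddSupport d, x i := by
  simp only [eval_eq, oddSupport, prod_filter, pow_eq_ite_odd (hx _)]

lemma card_oddSupport_le_totalDegree {p : MvPolynomial σ R} {d : σ →₀ ℕ} (hd : d ∈ p.support) :
    (oddSupport d).card ≤ p.totalDegree := by
  calc (oddSupport d).card ≤ d.support.card := card_filter_le _ _
    _ = ∑ i ∈ d.support, 1 := card_eq_sum_ones _
    _ ≤ d.sum fun _ e => e :=
      sum_le_sum fun i hi => Nat.one_le_iff_ne_zero.2 (d.mem_support_iff.1 hi)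
    _ ≤ p.totalDegree := le_totalDegree hd

/-- The mean of `p` over the cube `{1,-1}ⁿ`: only monomials with all exponents even survive. -/
noncomputable def evenCoeffSum (p : MvPolynomial σ R) : R :=
  ∑ d ∈ p.support with oddSupport d = ∅, p.coeff d

end OddSupport

lemma kwiseIndep.sum_eval_eq {n k : ℕ} {S : Finset (Fin n → ℝ)} (hk : k ≤ n)
    (hcube : ∀ x ∈ S, ∀ i, x i = 1 ∨ x i = -1) (hind : kwiseIndep n k S)
    {p : MvPolynomial (Fin n) ℝ} (hp : p.totalDegree < k) :
    ∑ x ∈ S, eval x p = evenCoeffSum p * S.card := by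
  rw [sum_congr rfl fun x hx => eval_eq_of_mem_cube (hcube x hx) p, sum_comm]
  have hterm : ∀ d ∈ p.support, ∑ x ∈ S, p.coeff d * ∏ i ∈ oddSupport d, x i
      = if oddSupport d = ∅ then p.coeff d * S.card else 0 := by
    intro d hd
    rw [← mul_sum]
    split_ifs with h
    · simp [h]
    · rw [kwiseIndep.sum_prod_eq_zero hk hcube hind (nonempty_iff_ne_empty.2 h)
        ((card_oddSupport_le_totalDegree hd).trans hp.le), mul_zero]
  rw [sum_congr rfl hterm, ← sum_filter, evenCoeffSum, sum_mul]
  congr -- the two filters differ only in their decidability instances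

theorem stmt7_general (n k : ℕ) (hk : k ≤ n) (ε : ℝ)
    (Pi C : Finset (Fin n → ℝ))
    (hPicube : ∀ x ∈ Pi, ∀ i, x i = 1 ∨ x i = -1)
    (hCcube : ∀ x ∈ C, ∀ i, x i = 1 ∨ x i = -1)
    (hPine : Pi.Nonempty) (hCne : C.Nonempty)
    (hPind : kwiseIndep n k Pi) (hCind : kwiseIndep n k C)
    (hfar : ∀ x ∈ C, ∀ z ∈ Pi,
      ε ≤ ((Finset.univ.filter (fun i : Fin n => x i ≠ z i)).card : ℝ) / n)
    (p : MvPolynomial (Fin n) ℝ)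
    (hneg : ∀ x ∈ Pi, MvPolynomial.eval x p < 0)
    (hpos : ∀ x : Fin n → ℝ, (∀ i, x i = 1 ∨ x i = -1) →
      (∀ z ∈ Pi, ε ≤ ((Finset.univ.filter (fun i : Fin n => x i ≠ z i)).card : ℝ) / n) →
      0 < MvPolynomial.eval x p) :
    k ≤ p.totalDegree := by
  by_contra! hdeg
  have hPi_neg : evenCoeffSum p * Pi.card < 0 :=
    hPind.sum_eval_eq hk hPicube hdeg ▸ sum_neg hneg hPine
  have hC_pos : 0 < evenCoeffSum p * C.card :=
    hCind.sum_eval_eq hk hCcube hdeg ▸ sum_pos (fun x hx => hpos x (hCcube x hx) (hfar x hx)) hCne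
  exact (neg_of_mul_neg_left hPi_neg (Nat.cast_nonneg _)).not_gt
    (pos_of_mul_pos_left hC_pos (Nat.cast_nonneg _))

/-- **Hard instances from k-wise independent sets.** If `Π, C ⊆ {1,-1}ⁿ` are
disjoint, nonempty, `k`-wise independent, and every element of `C` is `ε`-far
from `Π` in relative Hamming distance, then every real polynomial that is
negative on `Π` and positive on all points of the cube `ε`-far from `Π` has
degree at least `k`; i.e. the threshold degree of the associated partial
function is at least `k`. -/
theorem stmt7 (n k : ℕ) (hk : k ≤ n) (ε : ℝ) (hε : 0 < ε)
    (Pi C : Finset (Fin n → ℝ))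
    (hPicube : ∀ x ∈ Pi, ∀ i, x i = 1 ∨ x i = -1)
    (hCcube : ∀ x ∈ C, ∀ i, x i = 1 ∨ x i = -1)
    (hPine : Pi.Nonempty) (hCne : C.Nonempty)
    (hdisj : Disjoint Pi C)
    (hPind : kwiseIndep n k Pi) (hCind : kwiseIndep n k C)
    (hfar : ∀ x ∈ C, ∀ z ∈ Pi,
      ε ≤ ((Finset.univ.filter (fun i : Fin n => x i ≠ z i)).card : ℝ) / n)
    (p : MvPolynomial (Fin n) ℝ)
    (hneg : ∀ x ∈ Pi, MvPolynomial.eval x p < 0)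
    (hpos : ∀ x : Fin n → ℝ, (∀ i, x i = 1 ∨ x i = -1) →
      (∀ z ∈ Pi, ε ≤ ((Finset.univ.filter (fun i : Fin n => x i ≠ z i)).card : ℝ) / n) →
      0 < MvPolynomial.eval x p) :
    k ≤ p.totalDegree :=
  stmt7_general n k hk ε Pi C hPicube hCcube hPine hCne hPind hCind hfar p hneg hpos
end

section
/- Any interactive-proof verifier that, when interacting with an honest prover, accepts every n-bit string of even parity with probability at least 2/3, and, when interacting with any (possibly malicious) prover, rejects every string of odd parity with probability at least 2/3, must make at least n/3 oracle queries to its input on some input. -/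
open scoped Classical

/-- Decision trees querying bits of an `n`-bit string. -/
inductive DTree (n : ℕ) : Type
  | leaf : Bool → DTree n
  | node : Fin n → DTree n → DTree n → DTree n

/-- Depth of a decision tree. -/
def DTree.depth {n : ℕ} : DTree n → ℕ
  | .leaf _ => 0
  | .node _ l r => max l.depth r.depth + 1

/-- Evaluation of a decision tree on an input `x ∈ {0,1}ⁿ`. -/
def DTree.eval {n : ℕ} : DTree n → (Fin n → Bool) → Bool
  | .leaf b, _ => b
  | .node i l r, x => if x i then l.eval x else r.eval x

/-- The parity of a bit string. -/
def parity {n : ℕ} (x : Fin n → Bool) : Bool :=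
  decide ((Finset.univ.filter (fun i => x i = true)).card % 2 = 1)

/-!
Fix the all-zero input, which has even parity, and a prover that makes the verifier accept it
with probability at least `2/3`. Each run queries at most `q` coordinates, so by averaging some
coordinate `i` is queried with probability at most `q/n < 1/3`. Flipping bit `i` gives an input of
odd parity on which, against the same prover, every run that does not query `i` returns the same
verdict; hence it is still accepted with probability more than `2/3 - 1/3 = 1/3`, contradicting
soundness.
-/

open Finset

namespace DTree

variable {n : ℕ}

def queriesOn : DTree n → (Fin n → Bool) → Finset (Fin n)
  | .leaf _, _ => ∅
  | .node i l r, x => insert i (if x i then l.queriesOn x else r.queriesOn x)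

lemma card_queriesOn_le_depth (t : DTree n) (x : Fin n → Bool) :
    #(t.queriesOn x) ≤ t.depth := by
  induction t with
  | leaf b => simp [queriesOn, depth]
  | node i l r hl hr =>
    simp only [queriesOn, depth]
    refine (card_insert_le _ _).trans ?_
    split_ifs <;> omega

lemma eval_eq_of_forall_mem_queriesOn (t : DTree n) {x y : Fin n → Bool}
    (h : ∀ j ∈ t.queriesOn x, y j = x j) : t.eval y = t.eval x := by
  induction t with
  | leaf b => rfl
  | node i l r hl hr =>
    have hi : y i = x i := h i (mem_insert_self _ _)
    simp only [eval, hi]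
    split_ifs with hx
    · exact hl fun j hj => h j (by simp [queriesOn, hx, hj])
    · exact hr fun j hj => h j (by simp [queriesOn, hx, hj])

lemma card_filter_eval_le {Ω : Type*} [Fintype Ω] (t : Ω → DTree n) {x y : Fin n → Bool}
    {i : Fin n} (hxy : ∀ j ≠ i, y j = x j) :
    #{ω | (t ω).eval x = true} ≤
      #{ω | (t ω).eval y = true} + #{ω | i ∈ (t ω).queriesOn x} := by
  refine (card_le_card fun ω hω => ?_).trans (card_union_le _ _)
  rw [mem_filter] at hω
  by_cases hi : i ∈ (t ω).queriesOn x
  · simp [hi]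
  · have : (t ω).eval y = (t ω).eval x :=
      eval_eq_of_forall_mem_queriesOn _ fun j hj => hxy j (ne_of_mem_of_not_mem hj hi)
    simp [this, hω.2]

end DTree

lemma Finset.exists_card_filter_mem_lt {Ω ι R : Type*} [Fintype Ω] [Fintype ι] [DecidableEq ι]
    [Semiring R] [LinearOrder R] [IsOrderedRing R] (S : Ω → Finset ι) {q : ℕ} {m : R}
    (hS : ∀ ω, #(S ω) ≤ q) (h : Fintype.card Ω * (q : R) < Fintype.card ι * m) :
    ∃ i, (#{ω | i ∈ S ω} : R) < m := by
  by_contra! hm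
  have := card_nsmul_le_card_nsmul' (fun ω i => i ∈ S ω) (s := univ) (t := univ) (m := (q : R))
    (fun i _ => hm i) (fun ω _ => Nat.mono_cast (by simpa [bipartiteAbove] using hS ω))
  simp only [card_univ, nsmul_eq_mul] at this
  exact this.not_gt h

lemma parity_const_false (n : ℕ) : parity (fun _ : Fin n => false) = false := by
  simp [parity]

lemma parity_update_const_false {n : ℕ} (i : Fin n) :
    parity (Function.update (fun _ : Fin n => false) i true) = true := by
  simp [parity, Function.update_apply, filter_eq']

theorem stmt16_general (n r q : ℕ) (P : Type*)
    (tree : (Fin r → Bool) → P → DTree n)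
    (hdepth : ∀ ρ p, (tree ρ p).depth ≤ q)
    (hcomplete : ∀ x : Fin n → Bool, parity x = false → ∃ p : P,
      (2 : ℝ) / 3 ≤
        ((Finset.univ.filter
            (fun ρ : Fin r → Bool => (tree ρ p).eval x = true)).card : ℝ) / 2 ^ r)
    (hsound : ∀ x : Fin n → Bool, parity x = true → ∀ p : P,
      ((Finset.univ.filter
          (fun ρ : Fin r → Bool => (tree ρ p).eval x = true)).card : ℝ) / 2 ^ r ≤ 1 / 3) :
    (n : ℝ) / 3 ≤ q := by
  by_contra! hnq
  set x : Fin n → Bool := fun _ => false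
  obtain ⟨p, hx⟩ := hcomplete x (parity_const_false n)
  have h2r : (0 : ℝ) < 2 ^ r := by positivity
  have hcount : (Fintype.card (Fin r → Bool) : ℝ) * q < Fintype.card (Fin n) * (2 ^ r / 3) := by
    rw [Fintype.card_fun, Fintype.card_bool, Fintype.card_fin, Fintype.card_fin]
    push_cast
    nlinarith
  obtain ⟨i, hi⟩ := exists_card_filter_mem_lt (fun ρ => (tree ρ p).queriesOn x)
    (fun ρ => ((tree ρ p).card_queriesOn_le_depth x).trans (hdepth ρ p)) hcount
  have hy := hsound (Function.update x i true) (parity_update_const_false i) p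
  have hflip : (#{ρ | (tree ρ p).eval x = true} : ℝ) ≤
      #{ρ | (tree ρ p).eval (Function.update x i true) = true} +
        #{ρ | i ∈ (tree ρ p).queriesOn x} :=
    mod_cast DTree.card_filter_eval_le (fun ρ => tree ρ p)
      fun _ hj => Function.update_of_ne hj _ _
  rw [le_div_iff₀ h2r] at hx
  rw [div_le_iff₀ h2r] at hy
  linarith

/-- **IPs for parity need n/3 queries.** Model an interactive-proof verifier
with `r` random bits and query complexity `q` as follows: each random string
`ρ` and prover strategy `p` (ranging over an abstract nonempty type of
strategies) jointly determine a depth-`≤ q` decision tree of oracle queries to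
`x` whose output is the verdict. If every even-parity `x` is accepted with
probability at least `2/3` for some prover, and every odd-parity `x` is
accepted with probability at most `1/3` for every prover, then `q ≥ n/3`. -/
theorem stmt16 (n r q : ℕ) (P : Type*) (hP : Nonempty P)
    (tree : (Fin r → Bool) → P → DTree n)
    (hdepth : ∀ ρ p, (tree ρ p).depth ≤ q)
    (hcomplete : ∀ x : Fin n → Bool, parity x = false → ∃ p : P,
      (2 : ℝ) / 3 ≤
        ((Finset.univ.filter
            (fun ρ : Fin r → Bool => (tree ρ p).eval x = true)).card : ℝ) / 2 ^ r)
    (hsound : ∀ x : Fin n → Bool, parity x = true → ∀ p : P,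
      ((Finset.univ.filter
          (fun ρ : Fin r → Bool => (tree ρ p).eval x = true)).card : ℝ) / 2 ^ r ≤ 1 / 3) :
    (n : ℝ) / 3 ≤ q :=
  stmt16_general n r q P tree hdepth hcomplete hsound
end
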